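/- arXiv:2312.12137 — 3 statements merged into one kernel-verified Lean document; each statement's English description precedes it below -/
import Mathlib

section
/- Let K ≥ 2, define log-bar(i) = 1/2 + Σ_{k=2}^{i} 1/k. Let θ ∈ (0,1], j ∈ {2,...,K}, and x ∈ Σ (the simplex in ℝ^K) with a permutation σ ordering the coordinates so that x_{σ(1)} = ... = x_{σ(j)} > x_{σ(j+1)} > ... > x_{σ(K)} > 0 (set x_{σ(K+1)} = 0). Assume for every i ∈ {j,...,K} that θ·x_{σ(i)}·i·log-bar(i) ≤ 1 - θ·Σ_{k=i+1}^K x_{σ(k)}. Then for every i ∈ {j+1,...,K}, 1 - θ·Σ_{k=i}^K x_{σ(k)} ≥ log-bar(i-1)/log-bar(K). -/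
open Finset

/-- `log-bar i = 1/2 + ∑_{k=2}^{i} 1/k`. -/
noncomputable def logbar (i : ℕ) : ℝ := 1 / 2 + ∑ k ∈ Finset.Icc 2 i, (1 : ℝ) / k

lemma logbar_pos (n : ℕ) : 0 < logbar n := by
  have h : 0 ≤ ∑ k ∈ Finset.Icc 2 n, (1 : ℝ) / k :=
    Finset.sum_nonneg (fun k _ => by positivity)
  unfold logbar; linarith

lemma logbar_mono {i K : ℕ} (h : i ≤ K) : logbar i ≤ logbar K := by
  unfold logbar
  have := Finset.sum_le_sum_of_subset_of_nonneg
    (Finset.Icc_subset_Icc le_rfl h)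
    (fun k _ _ => by positivity : ∀ k ∈ Finset.Icc 2 K, k ∉ Finset.Icc 2 i → 0 ≤ (1:ℝ)/k)
  linarith

lemma logbar_succ {i : ℕ} (h : 1 ≤ i) : logbar (i + 1) = logbar i + 1 / (i + 1) := by
  unfold logbar
  rw [Finset.sum_Icc_succ_top (by omega : 2 ≤ i + 1)]
  push_cast
  ring

/-- if `x` lies in the simplex, sorted by a permutation `σ` as
`x_{σ(1)} = ⋯ = x_{σ(j)} > x_{σ(j+1)} > ⋯ > x_{σ(K)} > 0`, and for every
`i ∈ {j,…,K}` one has `θ x_{σ(i)} i logbar(i) ≤ 1 - θ ∑_{k=i+1}^K x_{σ(k)}`, then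
for every `i ∈ {j+1,…,K}`, `1 - θ ∑_{k=i}^K x_{σ(k)} ≥ logbar(i-1)/logbar(K)`. -/
theorem stmt_2 (K j : ℕ) (hK : 2 ≤ K) (hj : j ∈ Finset.Icc 2 K)
    (θ : ℝ) (hθ : θ ∈ Set.Ioc (0 : ℝ) 1)
    (x : ℕ → ℝ) (σ : Equiv.Perm ℕ)
    (hσ : ∀ k, k ∉ Finset.Icc 1 K → σ k = k)
    (hnonneg : ∀ k ∈ Finset.Icc 1 K, 0 ≤ x k)
    (hsum : ∑ k ∈ Finset.Icc 1 K, x k = 1)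
    (heq : ∀ k ∈ Finset.Icc 1 j, x (σ k) = x (σ 1))
    (hlt : ∀ k ∈ Finset.Icc j K, k < K → x (σ (k + 1)) < x (σ k))
    (hpos : 0 < x (σ K))
    (hyp : ∀ i ∈ Finset.Icc j K,
      θ * x (σ i) * i * logbar i ≤ 1 - θ * ∑ k ∈ Finset.Icc (i + 1) K, x (σ k)) :
    ∀ i ∈ Finset.Icc (j + 1) K,
      1 - θ * ∑ k ∈ Finset.Icc i K, x (σ k) ≥ logbar (i - 1) / logbar K := by
  simp only [Finset.mem_Icc] at hj
  have hLK : 0 < logbar K := logbar_pos K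
  -- downward induction: for all i with j ≤ i ≤ K,
  -- 1 - θ * ∑_{k=i+1}^K x(σ k) ≥ logbar i / logbar K
  have aux : ∀ d i, i + d = K → j ≤ i →
      1 - θ * ∑ k ∈ Finset.Icc (i + 1) K, x (σ k) ≥ logbar i / logbar K := by
    intro d
    induction d with
    | zero =>
      intro i hiK _
      have hi : i = K := by omega
      subst hi
      rw [Finset.Icc_eq_empty (by omega), Finset.sum_empty, div_self (ne_of_gt hLK)]
      norm_num
    | succ d ih =>
      intro i hiK hji
      have hiK' : i + 1 ≤ K := by omega
      have hA := ih (i + 1) (by omega) (by omega)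
      have hx := hyp (i + 1) (Finset.mem_Icc.mpr ⟨by omega, hiK'⟩)
      -- split the sum
      have hset : Finset.Icc (i + 1) K = insert (i + 1) (Finset.Icc (i + 2) K) := by
        ext a
        simp only [Finset.mem_Icc, Finset.mem_insert]
        omega
      have hsplit : ∑ k ∈ Finset.Icc (i + 1) K, x (σ k)
          = x (σ (i + 1)) + ∑ k ∈ Finset.Icc (i + 2) K, x (σ k) := by
        rw [hset, Finset.sum_insert (by simp)]
      set A : ℝ := 1 - θ * ∑ k ∈ Finset.Icc (i + 2) K, x (σ k) with hAdef
      rw [hsplit]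
      set T : ℝ := θ * x (σ (i + 1)) with hTdef
      have hL : 0 < logbar i := logbar_pos i
      have hL1 : 0 < logbar (i + 1) := logbar_pos (i + 1)
      have hLle : logbar (i + 1) ≤ logbar K := logbar_mono hiK'
      have hipos : (0:ℝ) < (i : ℝ) + 1 := by positivity
      have hrel : logbar (i + 1) = logbar i + 1 / ((i : ℝ) + 1) :=
        logbar_succ (by omega : 1 ≤ i)
      -- hx in convenient form
      have hx2 : T * (((i:ℝ) + 1) * logbar (i + 1)) ≤ A := by
        have e : T * (((i:ℝ) + 1) * logbar (i + 1))
            = θ * x (σ (i + 1)) * ((i + 1 : ℕ) : ℝ) * logbar (i + 1) := by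
          rw [hTdef]; push_cast; ring
        rw [e]; exact hx
      -- key identity: (i+1) * logbar(i+1) - 1 = (i+1) * logbar i
      have hkey : ((i:ℝ) + 1) * logbar (i + 1) - 1 = ((i:ℝ) + 1) * logbar i := by
        rw [hrel]; field_simp; ring
      have hALK : logbar (i + 1) ≤ A * logbar K := by
        rw [ge_iff_le, div_le_iff₀ hLK] at hA
        exact hA
      -- step: (A - T) * ((i+1) * logbar(i+1)) ≥ A * ((i+1) * logbar i)
      have hstep : A * (((i:ℝ) + 1) * logbar i)
          ≤ (A - T) * (((i:ℝ) + 1) * logbar (i + 1)) := by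
        have h3 : A * ((((i:ℝ) + 1) * logbar (i + 1)) - 1)
            = A * (((i:ℝ) + 1) * logbar i) := by linear_combination A * hkey
        nlinarith [hx2]
      -- multiply by logbar K and use hALK
      have s1 : A * (((i:ℝ) + 1) * logbar i) * logbar K
          ≤ (A - T) * (((i:ℝ) + 1) * logbar (i + 1)) * logbar K :=
        mul_le_mul_of_nonneg_right hstep hLK.le
      have s2 : (((i:ℝ) + 1) * logbar i) * logbar (i + 1)
          ≤ (((i:ℝ) + 1) * logbar i) * (A * logbar K) :=
        mul_le_mul_of_nonneg_left hALK (by positivity)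
      have hbig : logbar i * (((i:ℝ) + 1) * logbar (i + 1))
          ≤ ((A - T) * logbar K) * (((i:ℝ) + 1) * logbar (i + 1)) := by
        nlinarith [s1, s2]
      have hden : (0:ℝ) < ((i:ℝ) + 1) * logbar (i + 1) := by positivity
      have hfin : logbar i ≤ (A - T) * logbar K :=
        le_of_mul_le_mul_right hbig hden
      have goal1 : 1 - θ * (x (σ (i + 1)) + ∑ k ∈ Finset.Icc (i + 2) K, x (σ k))
          = A - T := by rw [hAdef, hTdef]; ring
      rw [goal1, ge_iff_le, div_le_iff₀ hLK]
      exact hfin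
  intro i hi
  simp only [Finset.mem_Icc] at hi
  have h := aux (K - (i - 1)) (i - 1) (by omega) (by omega)
  have h2 : i - 1 + 1 = i := by omega
  rwa [h2] at h
end

section
/- Let μ ∈ ℝ^K with μ₁ > μ₂ ≥ ... ≥ μ_K and j ∈ {2,...,K}. If i ∈ {2,...,j} is the smallest index with μ_i < (μ₁ + Σ_{k=i+1}^{j} μ_k)/(j - i + 1), then the infimum of Σ_{k=1}^{j} (λ_k - μ_k)² over λ ∈ ℝ^K subject to λ₁ ≤ min_{2≤k≤j} λ_k equals Σ_{k∈{1,i,i+1,...,j}} (μ_k - A)², where A = (μ₁ + Σ_{k=i}^{j} μ_k)/(j - i + 2). -/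
open Finset

/-- explicit value of the constrained quadratic minimization
`inf { ∑_{k=1}^j (λ_k - μ_k)² : λ₁ ≤ min_{2≤k≤j} λ_k }`, where `i` is the smallest
index in `{2,…,j}` with `μ_i < (μ₁ + ∑_{k=i+1}^j μ_k)/(j-i+1)`, and
`A = (μ₁ + ∑_{k=i}^j μ_k)/(j-i+2)`. -/
theorem stmt_3 (K j i : ℕ) (μ : ℕ → ℝ)
    (hj : j ∈ Finset.Icc 2 K)
    (h12 : μ 2 < μ 1)
    (hmono : ∀ k ∈ Finset.Icc 2 (K - 1), μ (k + 1) ≤ μ k)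
    (hi : i ∈ Finset.Icc 2 j)
    (hilt : μ i < (μ 1 + ∑ k ∈ Finset.Icc (i + 1) j, μ k) / ((j - i + 1 : ℕ) : ℝ))
    (hmin : ∀ m ∈ Finset.Icc 2 j, m < i →
      (μ 1 + ∑ k ∈ Finset.Icc (m + 1) j, μ k) / ((j - m + 1 : ℕ) : ℝ) ≤ μ m) :
    sInf {s : ℝ | ∃ lam : ℕ → ℝ,
        (∀ k ∈ Finset.Icc 2 j, lam 1 ≤ lam k) ∧
        s = ∑ k ∈ Finset.Icc 1 j, (lam k - μ k) ^ 2}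
      = ∑ k ∈ insert 1 (Finset.Icc i j),
          (μ k - (μ 1 + ∑ m ∈ Finset.Icc i j, μ m) / ((j - i + 2 : ℕ) : ℝ)) ^ 2 := by
  obtain ⟨hj2, hjK⟩ := Finset.mem_Icc.mp hj
  obtain ⟨hi2, hij⟩ := Finset.mem_Icc.mp hi
  set A : ℝ := (μ 1 + ∑ m ∈ Finset.Icc i j, μ m) / ((j - i + 2 : ℕ) : ℝ) with hA
  -- μ is decreasing on [2, K]
  have hdec : ∀ a, 2 ≤ a → ∀ b, a ≤ b → b ≤ K → μ b ≤ μ a := by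
    intro a ha b hab
    induction b, hab using Nat.le_induction with
    | base => intro _; exact le_refl _
    | succ b hb ih =>
        intro hbK
        have h1 := hmono b (Finset.mem_Icc.mpr ⟨by omega, by omega⟩)
        exact h1.trans (ih (by omega))
  have h1S : (1:ℕ) ∉ Finset.Icc i j := by
    simp only [Finset.mem_Icc]; omega
  set S := insert 1 (Finset.Icc i j) with hSdef
  have hsub : S ⊆ Finset.Icc 1 j := by
    rw [hSdef]
    intro k hk
    rw [Finset.mem_insert] at hk
    rcases hk with rfl | hk
    · rw [Finset.mem_Icc]; omega
    · rw [Finset.mem_Icc] at hk ⊢; omega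
  have hcardS : S.card = j - i + 2 := by
    rw [hSdef, Finset.card_insert_of_notMem h1S, Nat.card_Icc]; omega
  have hnR : (0:ℝ) < ((j - i + 2 : ℕ) : ℝ) := by
    exact_mod_cast Nat.succ_le_of_lt (by omega)
  have hsumS : ∑ k ∈ S, μ k = μ 1 + ∑ m ∈ Finset.Icc i j, μ m := by
    rw [hSdef, Finset.sum_insert h1S]
  have hAn : A * ((j - i + 2 : ℕ) : ℝ) = μ 1 + ∑ m ∈ Finset.Icc i j, μ m :=
    div_mul_cancel₀ _ (ne_of_gt hnR)
  have hsum0 : ∑ k ∈ S, (A - μ k) = 0 := by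
    rw [Finset.sum_sub_distrib, Finset.sum_const, hcardS, hsumS, nsmul_eq_mul,
      mul_comm, hAn, sub_self]
  -- μ i < A
  have hsplit : ∑ m ∈ Finset.Icc i j, μ m = μ i + ∑ k ∈ Finset.Icc (i+1) j, μ k := by
    rw [Finset.Icc_add_one_left_eq_Ioc, ← Finset.sum_insert Finset.left_notMem_Ioc,
      Finset.Ioc_insert_left hij]
  have hAi : μ i < A := by
    have hc : (0:ℝ) < ((j - i + 1 : ℕ) : ℝ) := by
      exact_mod_cast Nat.succ_le_of_lt (by omega)
    have h1 : μ i * ((j - i + 1 : ℕ) : ℝ) < μ 1 + ∑ k ∈ Finset.Icc (i+1) j, μ k :=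
      (lt_div_iff₀ hc).mp hilt
    rw [hA, lt_div_iff₀ hnR, hsplit]
    have e : (j - i + 2 : ℕ) = (j - i + 1) + 1 := by omega
    rw [e]
    push_cast at h1 ⊢
    linarith
  have hmuA : ∀ k ∈ Finset.Icc i j, μ k ≤ A := by
    intro k hk
    obtain ⟨hk1, hk2⟩ := Finset.mem_Icc.mp hk
    exact le_of_lt (lt_of_le_of_lt (hdec i hi2 k hk1 (by omega)) hAi)
  -- lower bound
  have hlb : ∀ s ∈ {s : ℝ | ∃ lam : ℕ → ℝ,
        (∀ k ∈ Finset.Icc 2 j, lam 1 ≤ lam k) ∧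
        s = ∑ k ∈ Finset.Icc 1 j, (lam k - μ k) ^ 2},
      ∑ k ∈ S, (μ k - A) ^ 2 ≤ s := by
    rintro s ⟨lam, hfeas, rfl⟩
    have key : ∑ k ∈ S, (μ k - A)^2 ≤ ∑ k ∈ S, (lam k - μ k)^2 := by
      have e : ∑ k ∈ S, (lam k - μ k)^2 =
          (∑ k ∈ S, (lam k - A)^2) + (∑ k ∈ S, (μ k - A)^2)
          + 2 * (∑ k ∈ S, (lam k - lam 1)*(A - μ k))
          + 2 * ((lam 1 - A) * ∑ k ∈ S, (A - μ k)) := by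
        rw [Finset.mul_sum, Finset.mul_sum, Finset.mul_sum, ← Finset.sum_add_distrib,
          ← Finset.sum_add_distrib, ← Finset.sum_add_distrib]
        exact Finset.sum_congr rfl (fun k _ => by ring)
      have h1 : 0 ≤ ∑ k ∈ S, (lam k - A)^2 :=
        Finset.sum_nonneg (fun k _ => sq_nonneg _)
      have h2 : 0 ≤ ∑ k ∈ S, (lam k - lam 1)*(A - μ k) := by
        apply Finset.sum_nonneg
        intro k hk
        rw [hSdef, Finset.mem_insert] at hk
        rcases hk with rfl | hk
        · simp
        · have hk2 : k ∈ Finset.Icc 2 j := by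
            rw [Finset.mem_Icc] at hk ⊢; omega
          exact mul_nonneg (by linarith [hfeas k hk2]) (by linarith [hmuA k hk])
      rw [e, hsum0]
      nlinarith
    refine key.trans ?_
    exact Finset.sum_le_sum_of_subset_of_nonneg hsub (fun k _ _ => sq_nonneg _)
  -- membership: the minimiser
  have hmem : (∑ k ∈ S, (μ k - A) ^ 2) ∈ {s : ℝ | ∃ lam : ℕ → ℝ,
        (∀ k ∈ Finset.Icc 2 j, lam 1 ≤ lam k) ∧
        s = ∑ k ∈ Finset.Icc 1 j, (lam k - μ k) ^ 2} := by
    refine ⟨fun k => if k ∈ S then A else μ k, ?_, ?_⟩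
    · intro k hk
      obtain ⟨hk2, hkj⟩ := Finset.mem_Icc.mp hk
      have h1mem : (1:ℕ) ∈ S := Finset.mem_insert_self _ _
      dsimp only
      rw [if_pos h1mem]
      by_cases hkS : k ∈ S
      · rw [if_pos hkS]
      · rw [if_neg hkS]
        have hki : k < i := by
          by_contra h
          exact hkS (by rw [hSdef, Finset.mem_insert, Finset.mem_Icc]; omega)
        have h3 : 3 ≤ i := by omega
        have hm := hmin (i-1) (Finset.mem_Icc.mpr ⟨by omega, by omega⟩) (by omega)
        have e1 : i - 1 + 1 = i := by omega
        have e2 : j - (i - 1) + 1 = j - i + 2 := by omega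
        rw [e1, e2] at hm
        exact hm.trans (hdec k hk2 (i-1) (by omega) (by omega))
    · dsimp only
      calc ∑ k ∈ S, (μ k - A)^2
          = ∑ k ∈ S, ((if k ∈ S then A else μ k) - μ k)^2 :=
            Finset.sum_congr rfl (fun k hk => by rw [if_pos hk]; ring)
        _ = ∑ k ∈ Finset.Icc 1 j, ((if k ∈ S then A else μ k) - μ k)^2 :=
            Finset.sum_subset hsub (fun k _ hk => by rw [if_neg hk]; simp)
  exact le_antisymm (csInf_le ⟨_, hlb⟩ hmem) (le_csInf ⟨_, hmem⟩ hlb)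
end

section
/- Let μ, μ' ∈ [0,1]^K with μ'₁ ≥ μ₁ and μ'_k ≤ μ_k for k = 2,...,j. Define ξ_j(ν) = inf{ Σ_{k=1}^{j} (λ_k - ν_k)² : λ ∈ ℝ^K, λ₁ ≤ min_{2≤k≤j} λ_k }. Then ξ_j(μ') ≥ ξ_j(μ). -/
open Finset

/-- monotonicity of
`ξ_j(ν) = inf { ∑_{k=1}^j (λ_k - ν_k)² : λ₁ ≤ min_{2≤k≤j} λ_k }`:
if `μ'₁ ≥ μ₁` and `μ'_k ≤ μ_k` for `k = 2,…,j` (both in `[0,1]^K`), then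
`ξ_j(μ') ≥ ξ_j(μ)`. -/
theorem stmt_4 (K j : ℕ) (hj : j ∈ Finset.Icc 2 K) (μ μ' : ℕ → ℝ)
    (hμ : ∀ k ∈ Finset.Icc 1 K, μ k ∈ Set.Icc (0 : ℝ) 1)
    (hμ' : ∀ k ∈ Finset.Icc 1 K, μ' k ∈ Set.Icc (0 : ℝ) 1)
    (h1 : μ 1 ≤ μ' 1)
    (hk : ∀ k ∈ Finset.Icc 2 j, μ' k ≤ μ k) :
    sInf {s : ℝ | ∃ lam : ℕ → ℝ,
        (∀ k ∈ Finset.Icc 2 j, lam 1 ≤ lam k) ∧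
        s = ∑ k ∈ Finset.Icc 1 j, (lam k - μ k) ^ 2}
    ≤ sInf {s : ℝ | ∃ lam : ℕ → ℝ,
        (∀ k ∈ Finset.Icc 2 j, lam 1 ≤ lam k) ∧
        s = ∑ k ∈ Finset.Icc 1 j, (lam k - μ' k) ^ 2} := by
  apply csInf_le_csInf
  · -- bounded below by 0
    refine ⟨0, ?_⟩
    rintro s ⟨lam, -, rfl⟩
    exact Finset.sum_nonneg fun k _ => sq_nonneg _
  · -- nonempty
    exact ⟨_, fun _ => (0 : ℝ), fun k _ => le_refl 0, rfl⟩
  · -- subset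
    rintro s ⟨lam, hfeas, rfl⟩
    refine ⟨fun k => lam k + μ k - μ' k, fun k hkmem => ?_, ?_⟩
    · have h2 : (2 : ℕ) ≤ k := (Finset.mem_Icc.mp hkmem).1
      have hne : k ≠ 1 := by omega
      have := hfeas k hkmem
      have := hk k hkmem
      show lam 1 + μ 1 - μ' 1 ≤ lam k + μ k - μ' k
      linarith
    · apply Finset.sum_congr rfl
      intro k _
      ring
end
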